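/- The map ρ ↦ (ρ_f, ρ_s), where ρ_f = Pρ + ρP − PρP and ρ_s = (1−P)ρ(1−P) + (Σ_k Γ_k)^{-1} Σ_k Γ_k Q_k ρ Q_k†, is injective on Hermitian operators; explicitly, ρ can be recovered as ρ = ρ_s + ρ_f − (Σ_k Γ_k)^{-1} Σ_k Γ_k Q_k ρ_f Q_k†. -/

import Mathlib

open Matrix

noncomputable section

abbrev Mat (N : ℕ) := Matrix (Fin (N + 1)) (Fin (N + 1)) ℂ

/-- excited state index -/
def eV (N : ℕ) : Fin (N + 1) := 0

/-- jump operator `Q_k = |g_k⟩⟨e|` -/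
def Q (N : ℕ) (k : Fin N) : Mat N := single k.succ (eV N) 1

/-- projector `P = |e⟩⟨e|` -/
def P (N : ℕ) : Mat N := single (eV N) (eV N) 1

/-- fast part `ρ_f = Pρ + ρP − PρP` -/
def rhoF (N : ℕ) (ρ : Mat N) : Mat N := P N * ρ + ρ * P N - P N * ρ * P N

/-- slow part `ρ_s = (1−P)ρ(1−P) + (Σ Γ)⁻¹ Σ Γ_k Q_k ρ Q_k†` -/
def rhoS (N : ℕ) (Γ : Fin N → ℝ) (ρ : Mat N) : Mat N :=
  (1 - P N) * ρ * (1 - P N) +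
    (((∑ k, Γ k : ℝ) : ℂ))⁻¹ • ∑ k, (Γ k : ℂ) • (Q N k * ρ * (Q N k)ᴴ)

/-!
Since `Q_k = Q_k P` and `Q_k† = P Q_k†`, the jump term sees `ρ` only through `P`, so it takes the
same value on `ρ` and on `ρ_f`. Moreover `(1 - P) ρ (1 - P) + ρ_f = ρ` in any ring, so subtracting
the jump term of `ρ_f` from `ρ_s + ρ_f` returns `ρ`. Injectivity follows at once.
-/

section Ring

variable {R : Type*} [Ring R]

theorem one_sub_mul_mul_one_sub_add_fastPart (p x : R) :
    (1 - p) * x * (1 - p) + (p * x + x * p - p * x * p) = x := by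
  noncomm_ring

theorem mul_fastPart_mul_of_mul_eq {p q q' : R} (hq : q * p = q) (hq' : p * q' = q') (x : R) :
    q * (p * x + x * p - p * x * p) * q' = q * x * q' := by
  have hleft : q * (p * x) * q' = q * x * q' := by rw [← mul_assoc, hq]
  have hright : q * (x * p) * q' = q * x * q' := by rw [mul_assoc, mul_assoc, hq', ← mul_assoc]
  have hboth : q * (p * x * p) * q' = q * x * q' := by
    rw [mul_assoc p, ← mul_assoc q, hq, mul_assoc, mul_assoc, hq', ← mul_assoc]
  rw [mul_sub, mul_add, sub_mul, add_mul, hleft, hright, hboth]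
  abel

end Ring

theorem Q_mul_P (N : ℕ) (k : Fin N) : Q N k * P N = Q N k := by
  simp [Q, P]

theorem P_mul_conjTranspose_Q (N : ℕ) (k : Fin N) : P N * (Q N k)ᴴ = (Q N k)ᴴ := by
  simp [Q, P, conjTranspose_single]

theorem Q_mul_rhoF_mul_conjTranspose_Q (N : ℕ) (k : Fin N) (ρ : Mat N) :
    Q N k * rhoF N ρ * (Q N k)ᴴ = Q N k * ρ * (Q N k)ᴴ :=
  mul_fastPart_mul_of_mul_eq (Q_mul_P N k) (P_mul_conjTranspose_Q N k) ρ

theorem eq_rhoS_add_rhoF_sub (N : ℕ) (Γ : Fin N → ℝ) (ρ : Mat N) :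
    ρ = rhoS N Γ ρ + rhoF N ρ -
        (((∑ k, Γ k : ℝ) : ℂ))⁻¹ • ∑ k, (Γ k : ℂ) • (Q N k * rhoF N ρ * (Q N k)ᴴ) := by
  simp only [rhoS, Q_mul_rhoF_mul_conjTranspose_Q]
  rw [add_right_comm, add_sub_cancel_right, rhoF, one_sub_mul_mul_one_sub_add_fastPart]

theorem stmt1_general (N : ℕ) (Γ : Fin N → ℝ) :
    (∀ ρ : Mat N, ρᴴ = ρ →
      ρ = rhoS N Γ ρ + rhoF N ρ -
        (((∑ k, Γ k : ℝ) : ℂ))⁻¹ • ∑ k, (Γ k : ℂ) • (Q N k * rhoF N ρ * (Q N k)ᴴ)) ∧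
    (∀ ρ₁ ρ₂ : Mat N, ρ₁ᴴ = ρ₁ → ρ₂ᴴ = ρ₂ →
      rhoF N ρ₁ = rhoF N ρ₂ → rhoS N Γ ρ₁ = rhoS N Γ ρ₂ → ρ₁ = ρ₂) := by
  refine ⟨fun ρ _ => eq_rhoS_add_rhoF_sub N Γ ρ, fun ρ₁ ρ₂ _ _ hF hS => ?_⟩
  rw [eq_rhoS_add_rhoF_sub N Γ ρ₁, eq_rhoS_add_rhoF_sub N Γ ρ₂, hF, hS]

theorem stmt1 (N : ℕ) (Γ : Fin N → ℝ) (hΓ : ∀ k, 0 < Γ k) :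
    (∀ ρ : Mat N, ρᴴ = ρ →
      ρ = rhoS N Γ ρ + rhoF N ρ -
        (((∑ k, Γ k : ℝ) : ℂ))⁻¹ • ∑ k, (Γ k : ℂ) • (Q N k * rhoF N ρ * (Q N k)ᴴ)) ∧
    (∀ ρ₁ ρ₂ : Mat N, ρ₁ᴴ = ρ₁ → ρ₂ᴴ = ρ₂ →
      rhoF N ρ₁ = rhoF N ρ₂ → rhoS N Γ ρ₁ = rhoS N Γ ρ₂ → ρ₁ = ρ₂) :=
  stmt1_general N Γ

end
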